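/- If G is a graph with ν(G) ≥ n, then the mode of the matching sequence occurs at index ⌊n/2⌋ or later; precisely, m_{⌊n/2⌋−1}(G) < m_{⌊n/2⌋}(G) whenever n ≥ 2. -/

import Mathlib

/-- `M` is a matching of `G`, viewed as a finite set of edges of `G` that are
pairwise vertex-disjoint. -/
def IsMatchingFinset {V : Type*} (G : SimpleGraph V) (M : Finset (Sym2 V)) : Prop :=
  (↑M : Set (Sym2 V)) ⊆ G.edgeSet ∧
    (↑M : Set (Sym2 V)).Pairwise (fun e f => ∀ x, x ∈ e → x ∉ f)

/-- The number of matchings of size `k` in `G`. -/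
noncomputable def matchCount {V : Type*} (G : SimpleGraph V) (k : ℕ) : ℕ :=
  {M : Finset (Sym2 V) | IsMatchingFinset G M ∧ M.card = k}.ncard

/-!
Fix a matching `F` with `|F| ≥ n ≥ 2k`, `k = ⌊n/2⌋`, and sort every matching `M` by its part
`R = M \ F` outside `F`. The matchings with a given `R` are exactly `R ∪ S` for `S` a subset of the
edges of `F` that share no vertex with `R`; since every edge of `R` meets at most two edges of `F`,
there are `a ≥ |F| - 2|R| ≥ 2(k - |R|)` such edges. So the number of matchings of size `j` over `R`
is `C(a, j - |R|)`, and `C(a, k - 1 - |R|) < C(a, k - |R|)` because `k - |R| ≤ a / 2`. Summing over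
all `R` of size at most `k - 1` gives `m_{k-1} < m_k`.
-/

open Finset

theorem Nat.choose_lt_succ_of_lt_half_left {r n : ℕ} (h : r < n / 2) :
    n.choose r < n.choose (r + 1) := by
  have hpos : 0 < n.choose r := Nat.choose_pos (by omega)
  have hmul : n.choose r * (r + 1) < n.choose r * (n - r) :=
    Nat.mul_lt_mul_of_pos_left (by omega) hpos
  rw [← Nat.choose_succ_right_eq] at hmul
  exact Nat.lt_of_mul_lt_mul_right hmul

section

open Classical

variable {V : Type*} {G : SimpleGraph V} {F M N R : Finset (Sym2 V)}

noncomputable def matchings [Fintype V] (G : SimpleGraph V) (j : ℕ) : Finset (Finset (Sym2 V)) :=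
  {M | IsMatchingFinset G M ∧ #M = j}

lemma mem_matchings [Fintype V] {j : ℕ} :
    M ∈ matchings G j ↔ IsMatchingFinset G M ∧ #M = j := by
  simp [matchings]

lemma matchCount_eq_card_matchings [Fintype V] (G : SimpleGraph V) (j : ℕ) :
    matchCount G j = #(matchings G j) := by
  rw [matchCount, ← Set.ncard_coe_finset]
  congr 1
  ext M
  simp [mem_matchings]

noncomputable def avoiding (F R : Finset (Sym2 V)) : Finset (Sym2 V) :=
  {e ∈ F | ∀ f ∈ R, ∀ x ∈ e, x ∉ f}

lemma mem_avoiding {e : Sym2 V} : e ∈ avoiding F R ↔ e ∈ F ∧ ∀ f ∈ R, ∀ x ∈ e, x ∉ f :=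
  mem_filter

lemma avoiding_subset : avoiding F R ⊆ F :=
  filter_subset _ F

lemma isMatchingFinset_empty : IsMatchingFinset G ∅ := by
  simp [IsMatchingFinset]

namespace IsMatchingFinset

lemma subset (hM : IsMatchingFinset G M) (h : N ⊆ M) : IsMatchingFinset G N :=
  ⟨(coe_subset.mpr h).trans hM.1, hM.2.mono (coe_subset.mpr h)⟩

lemma union (hM : IsMatchingFinset G M) (hN : IsMatchingFinset G N)
    (hMN : ∀ e ∈ M, ∀ f ∈ N, ∀ x ∈ e, x ∉ f) : IsMatchingFinset G (M ∪ N) := by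
  refine ⟨by simpa only [coe_union, Set.union_subset_iff] using ⟨hM.1, hN.1⟩, ?_⟩
  intro e he f hf hef
  simp only [coe_union, Set.mem_union, mem_coe] at he hf
  rcases he with he | he <;> rcases hf with hf | hf
  · exact hM.2 he hf hef
  · exact hMN e he f hf
  · exact fun x hxe hxf => hMN f hf e he x hxf hxe
  · exact hN.2 he hf hef

lemma card_filter_mem_le_one (hF : IsMatchingFinset G F) (x : V) : #{e ∈ F | x ∈ e} ≤ 1 := by
  refine card_le_one.mpr fun e he f hf => ?_
  rw [mem_filter] at he hf
  by_contra hef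
  exact hF.2 he.1 hf.1 hef x he.2 hf.2

lemma card_filter_meets_le_two (hF : IsMatchingFinset G F) (f : Sym2 V) :
    #{e ∈ F | ∃ x ∈ e, x ∈ f} ≤ 2 := by
  induction f using Sym2.ind with
  | _ a b =>
    have hsub : {e ∈ F | ∃ x ∈ e, x ∈ s(a, b)} ⊆ {e ∈ F | a ∈ e} ∪ {e ∈ F | b ∈ e} := by
      intro e he
      obtain ⟨heF, x, hxe, hx⟩ := mem_filter.mp he
      rcases Sym2.mem_iff.mp hx with rfl | rfl <;> simp [heF, hxe]
    calc _ ≤ #({e ∈ F | a ∈ e} ∪ {e ∈ F | b ∈ e}) := card_le_card hsub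
      _ ≤ 1 + 1 := (card_union_le _ _).trans
          (add_le_add (hF.card_filter_mem_le_one a) (hF.card_filter_mem_le_one b))

lemma card_le_card_avoiding_add (hF : IsMatchingFinset G F) (R : Finset (Sym2 V)) :
    #F ≤ #(avoiding F R) + 2 * #R := by
  have hsub : F \ avoiding F R ⊆ R.biUnion fun f => {e ∈ F | ∃ x ∈ e, x ∈ f} := by
    intro e he
    obtain ⟨heF, hnot⟩ := mem_sdiff.mp he
    simp only [mem_avoiding, heF, true_and, not_forall, not_not] at hnot
    obtain ⟨f, hf, x, hxe, hxf⟩ := hnot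
    exact mem_biUnion.mpr ⟨f, hf, mem_filter.mpr ⟨heF, x, hxe, hxf⟩⟩
  have hout : #(F \ avoiding F R) ≤ 2 * #R :=
    calc _ ≤ ∑ f ∈ R, #{e ∈ F | ∃ x ∈ e, x ∈ f} := (card_le_card hsub).trans card_biUnion_le
      _ ≤ ∑ _f ∈ R, 2 := sum_le_sum fun f _ => hF.card_filter_meets_le_two f
      _ = 2 * #R := by rw [sum_const, smul_eq_mul, mul_comm]
  have := card_sdiff_add_card_eq_card (avoiding_subset : avoiding F R ⊆ F)
  omega

end IsMatchingFinset

lemma card_matchings_filter_sdiff_eq [Fintype V] (hF : IsMatchingFinset G F)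
    (hR : IsMatchingFinset G R) (hRF : Disjoint R F) {j : ℕ} (hj : #R ≤ j) :
    #{M ∈ matchings G j | M \ F = R} = (#(avoiding F R)).choose (j - #R) := by
  rw [← card_powersetCard]
  refine card_nbij' (· ∩ F) (R ∪ ·) ?_ ?_ ?_ ?_
  · intro M hM
    simp only [coe_filter, Set.mem_ofPred_eq, mem_matchings] at hM
    obtain ⟨⟨hMm, hMj⟩, hMR⟩ := hM
    refine mem_powersetCard.mpr ⟨fun e he => ?_, ?_⟩
    · obtain ⟨heM, heF⟩ := mem_inter.mp he
      refine mem_avoiding.mpr ⟨heF, fun f hf x hxe hxf => ?_⟩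
      rw [← hMR, mem_sdiff] at hf
      exact hMm.2 heM hf.1 (by rintro rfl; exact hf.2 heF) x hxe hxf
    · have := card_inter_add_card_sdiff M F
      rw [hMR] at this
      dsimp only
      omega
  · intro S hS
    obtain ⟨hSa, hSj⟩ := mem_powersetCard.mp hS
    have hSF : S ⊆ F := hSa.trans avoiding_subset
    have hSm : IsMatchingFinset G S := hF.subset hSF
    simp only [coe_filter, Set.mem_ofPred_eq, mem_matchings]
    have hRS : ∀ e ∈ R, ∀ f ∈ S, ∀ x ∈ e, x ∉ f := fun e he f hf x hxe hxf =>
      (mem_avoiding.mp (hSa hf)).2 e he x hxf hxe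
    refine ⟨⟨hR.union hSm hRS, ?_⟩, ?_⟩
    · rw [card_union_of_disjoint (hRF.mono_right hSF), hSj]
      omega
    · rw [union_sdiff_distrib, sdiff_eq_empty_iff_subset.mpr hSF, union_empty,
        sdiff_eq_self_of_disjoint hRF]
  · intro M hM
    simp only [coe_filter, Set.mem_ofPred_eq] at hM
    simp only [← hM.2, sdiff_union_inter]
  · intro S hS
    have hSF : S ⊆ F := (mem_powersetCard.mp hS).1.trans avoiding_subset
    simp only [union_inter_distrib_right, disjoint_iff_inter_eq_empty.mp hRF, empty_union,
      inter_eq_left.mpr hSF]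

lemma card_matchings_filter_sdiff_lt_succ [Fintype V] (hF : IsMatchingFinset G F)
    (hR : IsMatchingFinset G R) (hRF : Disjoint R F) {j : ℕ} (hj : #R ≤ j)
    (hjF : 2 * (j + 1) ≤ #F) :
    #{M ∈ matchings G j | M \ F = R} < #{M ∈ matchings G (j + 1) | M \ F = R} := by
  rw [card_matchings_filter_sdiff_eq hF hR hRF hj,
    card_matchings_filter_sdiff_eq hF hR hRF (hj.trans j.le_succ),
    show j + 1 - #R = j - #R + 1 by omega]
  have := hF.card_le_card_avoiding_add R
  exact Nat.choose_lt_succ_of_lt_half_left (by omega)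

end

theorem stmt_15 {V : Type*} [Fintype V] (G : SimpleGraph V) (n : ℕ) (hn : 2 ≤ n)
    (hν : ∃ M : Finset (Sym2 V), IsMatchingFinset G M ∧ n ≤ M.card) :
    matchCount G (n / 2 - 1) < matchCount G (n / 2) := by
  classical
  obtain ⟨F, hF, hFn⟩ := hν
  obtain ⟨k, hk⟩ : ∃ k, n / 2 = k + 1 := ⟨n / 2 - 1, by omega⟩
  let outside : Finset (Finset (Sym2 V)) := {R | IsMatchingFinset G R ∧ Disjoint R F ∧ #R ≤ k}
  have hmaps : Set.MapsTo (· \ F) (matchings G k) outside := fun M hM => by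
    obtain ⟨hMm, hMk⟩ := mem_matchings.mp hM
    simp only [outside, coe_filter, mem_univ, true_and, Set.mem_ofPred_eq]
    exact ⟨hMm.subset sdiff_subset, sdiff_disjoint, hMk ▸ card_le_card sdiff_subset⟩
  rw [hk, Nat.add_sub_cancel, matchCount_eq_card_matchings, matchCount_eq_card_matchings]
  calc #(matchings G k) = ∑ R ∈ outside, #{M ∈ matchings G k | M \ F = R} :=
        card_eq_sum_card_fiberwise hmaps
    _ < ∑ R ∈ outside, #{M ∈ matchings G (k + 1) | M \ F = R} :=
        sum_lt_sum_of_nonempty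
          ⟨∅, mem_filter.mpr ⟨mem_univ _, isMatchingFinset_empty, disjoint_empty_left F, by simp⟩⟩
          fun R hR => by
          simp only [outside, mem_filter, mem_univ, true_and] at hR
          exact card_matchings_filter_sdiff_lt_succ hF hR.1 hR.2.1 hR.2.2 (by omega)
    _ = #{M ∈ matchings G (k + 1) | M \ F ∈ outside} := sum_card_fiberwise_eq_card_filter _ _ _
    _ ≤ #(matchings G (k + 1)) := card_filter_le _ _
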